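/- arXiv:2301.02389 — 3 statements merged into one kernel-verified Lean document; each statement's English description precedes it below -/
import Mathlib

section
/- For any initial state s₁ with V_c^*(s₁) = 0 and any Markovian policy π, the expected number of times π takes an action outside the restricted action set 𝒜̄ (where 𝒜̄_s = {a : Q_c^*(s,a) ≤ V_c^*(s)}) starting from s₁ is zero if and only if V_c^π(s₁) = 0. -/
open Finset

/-- Expected sum of the per-step functions `f` (indexed by the number of remaining
steps) along trajectories generated by policy `π` under dynamics `P`. -/
noncomputable def EV {S A : Type*} [Fintype S] [Fintype A]
    (P : S → A → S → ℝ) (π : ℕ → S → A → ℝ) (f : ℕ → S → A → ℝ) :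
    ℕ → S → ℝ
  | 0, _ => 0
  | n + 1, s =>
      ∑ a, π (n + 1) s a * (f (n + 1) s a + ∑ s', P s a s' * EV P π f n s')

/-- State-action value (cost-to-go) of a policy, with `n` remaining steps. -/
noncomputable def Qval {S A : Type*} [Fintype S] [Fintype A]
    (P : S → A → S → ℝ) (c : ℕ → S → A → ℝ) (π : ℕ → S → A → ℝ) :
    ℕ → S → A → ℝ
  | 0, _, _ => 0
  | n + 1, s, a => c (n + 1) s a + ∑ s', P s a s' * EV P π c n s'

/-- `P` is a stochastic transition kernel. -/
def StochMat {S A : Type*} [Fintype S] (P : S → A → S → ℝ) : Prop :=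
  ∀ s a, (∀ s', 0 ≤ P s a s') ∧ ∑ s', P s a s' = 1

/-- `π` is a (Markovian, possibly time-dependent) stochastic policy. -/
def StochPol {S A : Type*} [Fintype A] (π : ℕ → S → A → ℝ) : Prop :=
  ∀ n s, (∀ a, 0 ≤ π n s a) ∧ ∑ a, π n s a = 1

/-! Both expectations are nonnegative, so each vanishes exactly when every action taken with
positive probability, and every successor reached with positive probability, contributes zero;
one inducts on the horizon along these reachable state-action pairs. At a state with
`V*(s) = 0`, taking `a ∈ 𝒜̄_s` means `Q*(s, a) ≤ 0`. The Bellman lower bound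
`c(s, a) + E[V*(s')] ≤ Q*(s, a)` turns this into zero immediate cost and `V* = 0` at the
successors, while conversely `Q*(s, a) ≤ Q^π(s, a) = 0` when `π` accrues no cost after `a`. -/

theorem add_sum_mul_eq_zero_iff_of_nonneg {ι : Type*} [Fintype ι] {x : ℝ} {w v : ι → ℝ}
    (hx : 0 ≤ x) (hw : ∀ i, 0 ≤ w i) (hv : ∀ i, 0 ≤ v i) :
    x + ∑ i, w i * v i = 0 ↔ x = 0 ∧ ∀ i, w i ≠ 0 → v i = 0 := by
  rw [add_eq_zero_iff_of_nonneg hx (sum_nonneg fun i _ => mul_nonneg (hw i) (hv i)),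
    sum_eq_zero_iff_of_nonneg fun i _ => mul_nonneg (hw i) (hv i)]
  simp only [mem_univ, true_implies, mul_eq_zero, or_iff_not_imp_left]

section

variable {S A : Type*} [Fintype S] [Fintype A] {P : S → A → S → ℝ}

theorem EV_nonneg {π : ℕ → S → A → ℝ} {f : ℕ → S → A → ℝ} (hP : ∀ s a s', 0 ≤ P s a s')
    (hπ : ∀ n s a, 0 ≤ π n s a) (hf : ∀ n s a, 0 ≤ f n s a) (n : ℕ) (s : S) :
    0 ≤ EV P π f n s := by
  induction n generalizing s with
  | zero => simp [EV]
  | succ n ih =>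
    exact sum_nonneg fun a _ => mul_nonneg (hπ _ s a)
      (add_nonneg (hf _ s a) (sum_nonneg fun s' _ => mul_nonneg (hP s a s') (ih s')))

theorem EV_succ_eq_zero_iff {π : ℕ → S → A → ℝ} {f : ℕ → S → A → ℝ}
    (hP : ∀ s a s', 0 ≤ P s a s') (hπ : ∀ n s a, 0 ≤ π n s a) (hf : ∀ n s a, 0 ≤ f n s a)
    (n : ℕ) (s : S) :
    EV P π f (n + 1) s = 0 ↔ ∀ a, π (n + 1) s a ≠ 0 →
      f (n + 1) s a = 0 ∧ ∀ s', P s a s' ≠ 0 → EV P π f n s' = 0 := by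
  have hstep : ∀ a, 0 ≤ f (n + 1) s a + ∑ s', P s a s' * EV P π f n s' := fun a =>
    add_nonneg (hf _ s a) (sum_nonneg fun s' _ => mul_nonneg (hP s a s') (EV_nonneg hP hπ hf n s'))
  have h := add_sum_mul_eq_zero_iff_of_nonneg le_rfl (hπ (n + 1) s) hstep
  rw [zero_add, and_iff_right rfl] at h
  rw [EV, h]
  refine forall₂_congr fun a _ => ?_
  rw [add_sum_mul_eq_zero_iff_of_nonneg (hf _ s a) (hP s a) (EV_nonneg hP hπ hf n)]

theorem Qval_succ_eq_zero_iff {c : ℕ → S → A → ℝ} {π : ℕ → S → A → ℝ}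
    (hP : ∀ s a s', 0 ≤ P s a s') (hπ : ∀ n s a, 0 ≤ π n s a) (hc : ∀ n s a, 0 ≤ c n s a)
    (n : ℕ) (s : S) (a : A) :
    Qval P c π (n + 1) s a = 0 ↔ c (n + 1) s a = 0 ∧ ∀ s', P s a s' ≠ 0 → EV P π c n s' = 0 :=
  add_sum_mul_eq_zero_iff_of_nonneg (hc _ s a) (hP s a) (EV_nonneg hP hπ hc n)

variable {c : ℕ → S → A → ℝ} {Vstar : ℕ → S → ℝ} {Qstar : ℕ → S → A → ℝ}

theorem optimal_value_nonneg (hP : ∀ s a s', 0 ≤ P s a s') (hc : ∀ n s a, 0 ≤ c n s a)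
    (hV : ∀ n s, IsLeast {x : ℝ | ∃ π, StochPol π ∧ x = EV P π c n s} (Vstar n s))
    (n : ℕ) (s : S) : 0 ≤ Vstar n s := by
  obtain ⟨π, hπ, hVπ⟩ := (hV n s).1
  exact hVπ ▸ EV_nonneg hP (fun n s => (hπ n s).1) hc n s

theorem add_sum_optimal_value_le_optimal_Q (hP : ∀ s a s', 0 ≤ P s a s')
    (hV : ∀ n s, IsLeast {x : ℝ | ∃ π, StochPol π ∧ x = EV P π c n s} (Vstar n s))
    (hQ : ∀ n s a,
      IsLeast {x : ℝ | ∃ π, StochPol π ∧ x = Qval P c π n s a} (Qstar n s a))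
    (n : ℕ) (s : S) (a : A) :
    c (n + 1) s a + ∑ s', P s a s' * Vstar n s' ≤ Qstar (n + 1) s a := by
  obtain ⟨π, hπ, hQπ⟩ := (hQ (n + 1) s a).1
  rw [hQπ, Qval]
  gcongr with s'
  · exact hP s a s'
  · exact (hV n s').2 ⟨π, hπ, rfl⟩

theorem cost_and_next_optimal_value_eq_zero_of_optimal_Q_nonpos (hP : ∀ s a s', 0 ≤ P s a s')
    (hc : ∀ n s a, 0 ≤ c n s a)
    (hV : ∀ n s, IsLeast {x : ℝ | ∃ π, StochPol π ∧ x = EV P π c n s} (Vstar n s))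
    (hQ : ∀ n s a,
      IsLeast {x : ℝ | ∃ π, StochPol π ∧ x = Qval P c π n s a} (Qstar n s a))
    {n : ℕ} {s : S} {a : A} (hQa : Qstar (n + 1) s a ≤ 0) :
    c (n + 1) s a = 0 ∧ ∀ s', P s a s' ≠ 0 → Vstar n s' = 0 := by
  have hVnext := optimal_value_nonneg hP hc hV n
  refine (add_sum_mul_eq_zero_iff_of_nonneg (hc _ s a) (hP s a) hVnext).1 (le_antisymm ?_ ?_)
  · exact (add_sum_optimal_value_le_optimal_Q hP hV hQ n s a).trans hQa
  · exact add_nonneg (hc _ s a) (sum_nonneg fun s' _ => mul_nonneg (hP s a s') (hVnext s'))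

theorem EV_outside_restricted_eq_zero_iff (hP : ∀ s a s', 0 ≤ P s a s')
    (hc : ∀ n s a, 0 ≤ c n s a)
    (hV : ∀ n s, IsLeast {x : ℝ | ∃ π, StochPol π ∧ x = EV P π c n s} (Vstar n s))
    (hQ : ∀ n s a,
      IsLeast {x : ℝ | ∃ π, StochPol π ∧ x = Qval P c π n s a} (Qstar n s a))
    {π : ℕ → S → A → ℝ} (hπ : StochPol π) (n : ℕ) (s : S) (hs : Vstar n s = 0) :
    EV P π (fun n s a => if Qstar n s a ≤ Vstar n s then 0 else 1) n s = 0 ↔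
      EV P π c n s = 0 := by
  induction n generalizing s with
  | zero => simp [EV]
  | succ n ih =>
    have hπ₀ : ∀ n s a, 0 ≤ π n s a := fun n s => (hπ n s).1
    have hg : ∀ n s a, 0 ≤ if Qstar n s a ≤ Vstar n s then (0 : ℝ) else 1 := by
      intro n s a
      split_ifs <;> norm_num
    rw [EV_succ_eq_zero_iff hP hπ₀ hg, EV_succ_eq_zero_iff hP hπ₀ hc]
    refine forall₂_congr fun a _ => ?_
    simp only [hs, ite_eq_left_iff, one_ne_zero, imp_false, not_not]
    constructor
    · rintro ⟨hQa, hnext⟩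
      obtain ⟨hca, hV0⟩ := cost_and_next_optimal_value_eq_zero_of_optimal_Q_nonpos hP hc hV hQ hQa
      exact ⟨hca, fun s' hs' => (ih s' (hV0 s' hs')).1 (hnext s' hs')⟩
    · rintro ⟨hca, hnext⟩
      have hQval : Qval P c π (n + 1) s a = 0 :=
        (Qval_succ_eq_zero_iff hP hπ₀ hc n s a).2 ⟨hca, hnext⟩
      refine ⟨hQval ▸ (hQ (n + 1) s a).2 ⟨π, hπ, rfl⟩, fun s' hs' => ?_⟩
      have hV0 : Vstar n s' = 0 := le_antisymm (hnext s' hs' ▸ (hV n s').2 ⟨π, hπ, rfl⟩)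
        (optimal_value_nonneg hP hc hV n s')
      exact (ih s' hV0).2 (hnext s' hs')

end

/-- For any initial state `s₁` with `V_c^*(s₁) = 0` and any Markovian
policy `π`, the expected number of times `π` takes an action outside the restricted
action set `𝒜̄_s = {a : Q_c^*(s,a) ≤ V_c^*(s)}` starting from `s₁` is zero iff
`V_c^π(s₁) = 0`. -/
theorem restricted_policy_iff_zero_cost
    {S A : Type*} [Fintype S] [Fintype A]
    (P : S → A → S → ℝ) (c : ℕ → S → A → ℝ) (H : ℕ)
    (Vstar : ℕ → S → ℝ) (Qstar : ℕ → S → A → ℝ)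
    (hP : StochMat P)
    (hc : ∀ n s a, 0 ≤ c n s a)
    (hV : ∀ n s, IsLeast {x : ℝ | ∃ π, StochPol π ∧ x = EV P π c n s} (Vstar n s))
    (hQ : ∀ n s a,
      IsLeast {x : ℝ | ∃ π, StochPol π ∧ x = Qval P c π n s a} (Qstar n s a))
    (π : ℕ → S → A → ℝ) (hπ : StochPol π)
    (s₁ : S) (hs₁ : Vstar H s₁ = 0) :
    EV P π (fun n s a => if Qstar n s a ≤ Vstar n s then 0 else 1) H s₁ = 0 ↔
      EV P π c H s₁ = 0 := by
  exact EV_outside_restricted_eq_zero_iff (fun s a => (hP s a).1) hc hV hQ hπ H s₁ hs₁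
end

section
/- For any primal-dual sequence {(π^k, λ^k)}_{k=1}^K, the total constraint violation satisfies ∑_{k=1}^K V_c^{π^k}(s₁^k) ≤ R_p({π^k}, π*) + R_d({λ^k}, λ*), where λ* = λ̂ + 1 and (π*, λ̂) is a common saddle-point with V_c^{π*}(s₁^k) = 0 for all k. -/
open Finset

/-- Episode-`k` Lagrangian `ℒ^k(π, λ) = V_r^π(s₁^k) − λ(s₁^k)·V_c^π(s₁^k)`. -/
def Lag {S Policy : Type*} (Vr Vc : Policy → S → ℝ) {K : ℕ}
    (s1 : Fin K → S) (k : Fin K) (π : Policy) (lam : S → ℝ) : ℝ :=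
  Vr π (s1 k) - lam (s1 k) * Vc π (s1 k)

/-- Primal regret `R_p({π^k}, π_c) = ∑_k (ℒ^k(π_c, λ^k) − ℒ^k(π^k, λ^k))`. -/
def Rp {S Policy : Type*} (Vr Vc : Policy → S → ℝ) {K : ℕ}
    (s1 : Fin K → S) (pik : Fin K → Policy) (lamk : Fin K → S → ℝ)
    (πc : Policy) : ℝ :=
  ∑ k, (Lag Vr Vc s1 k πc (lamk k) - Lag Vr Vc s1 k (pik k) (lamk k))

/-- Dual regret `R_d({λ^k}, λ_c) = ∑_k (ℒ^k(π^k, λ^k) − ℒ^k(π^k, λ_c))`. -/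
def Rd {S Policy : Type*} (Vr Vc : Policy → S → ℝ) {K : ℕ}
    (s1 : Fin K → S) (pik : Fin K → Policy) (lamk : Fin K → S → ℝ)
    (lamc : S → ℝ) : ℝ :=
  ∑ k, (Lag Vr Vc s1 k (pik k) (lamk k) - Lag Vr Vc s1 k (pik k) lamc)

/- The two regrets telescope to `∑ₖ (ℒᵏ(π*, λᵏ) − ℒᵏ(πᵏ, λ̂ + 1))`. Since `V_c^{π*} = 0`, the first
term does not depend on the multiplier, so it equals `ℒᵏ(π*, λ̂) ≥ ℒᵏ(πᵏ, λ̂)` by the saddle-point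
property, and `ℒᵏ(πᵏ, λ̂) − ℒᵏ(πᵏ, λ̂ + 1) = V_c^{πᵏ}(s₁ᵏ)`. -/

section Lagrangian

variable {S Policy : Type*} (Vr Vc : Policy → S → ℝ) {K : ℕ} (s1 : Fin K → S)

theorem Lag_sub_Lag_add_one (k : Fin K) (π : Policy) (lam : S → ℝ) :
    Lag Vr Vc s1 k π lam - Lag Vr Vc s1 k π (fun s => lam s + 1) = Vc π (s1 k) := by
  simp only [Lag]
  ring

theorem Lag_congr_of_Vc_eq_zero {k : Fin K} {π : Policy} (h : Vc π (s1 k) = 0)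
    (lam lam' : S → ℝ) : Lag Vr Vc s1 k π lam = Lag Vr Vc s1 k π lam' := by
  simp only [Lag, h, mul_zero]

theorem Rp_add_Rd (pik : Fin K → Policy) (lamk : Fin K → S → ℝ) (πc : Policy)
    (lamc : S → ℝ) :
    Rp Vr Vc s1 pik lamk πc + Rd Vr Vc s1 pik lamk lamc =
      ∑ k, (Lag Vr Vc s1 k πc (lamk k) - Lag Vr Vc s1 k (pik k) lamc) := by
  rw [Rp, Rd, ← sum_add_distrib]
  exact sum_congr rfl fun k _ => by ring

end Lagrangian

theorem total_violation_le_regret_sum_general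
    {S Policy : Type*} (Vr Vc : Policy → S → ℝ) {K : ℕ}
    (s1 : Fin K → S) (pik : Fin K → Policy) (lamk : Fin K → S → ℝ)
    (πstar : Policy) (lamhat : S → ℝ)
    (hVc0 : ∀ k, Vc πstar (s1 k) = 0)
    (hsaddle : ∀ (k : Fin K) (π : Policy),
      Lag Vr Vc s1 k π lamhat ≤ Lag Vr Vc s1 k πstar lamhat) :
    ∑ k, Vc (pik k) (s1 k) ≤
      Rp Vr Vc s1 pik lamk πstar +
        Rd Vr Vc s1 pik lamk (fun s => lamhat s + 1) := by
  rw [Rp_add_Rd]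
  calc ∑ k, Vc (pik k) (s1 k)
      = ∑ k, (Lag Vr Vc s1 k (pik k) lamhat
          - Lag Vr Vc s1 k (pik k) (fun s => lamhat s + 1)) := by
        simp only [Lag_sub_Lag_add_one]
    _ ≤ ∑ k, (Lag Vr Vc s1 k πstar lamhat
          - Lag Vr Vc s1 k (pik k) (fun s => lamhat s + 1)) :=
        sum_le_sum fun k _ => sub_le_sub_right (hsaddle k (pik k)) _
    _ = ∑ k, (Lag Vr Vc s1 k πstar (lamk k)
          - Lag Vr Vc s1 k (pik k) (fun s => lamhat s + 1)) :=
        sum_congr rfl fun k _ => by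
          rw [Lag_congr_of_Vc_eq_zero Vr Vc s1 (hVc0 k) lamhat (lamk k)]

/-- Total constraint violation bound:
`∑_k V_c^{π^k}(s₁^k) ≤ R_p({π^k}, π*) + R_d({λ^k}, λ̂ + 1)`, where `(π*, λ̂)` is a
common saddle-point with `V_c^{π*}(s₁^k) = 0` for all `k`. -/
theorem total_violation_le_regret_sum
    {S Policy : Type*} (Vr Vc : Policy → S → ℝ) {K : ℕ}
    (s1 : Fin K → S) (pik : Fin K → Policy) (lamk : Fin K → S → ℝ)
    (πstar : Policy) (lamhat : S → ℝ)
    (hlamhat : ∀ s, 0 ≤ lamhat s) (hlamk : ∀ k s, 0 ≤ lamk k s)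
    (hVc0 : ∀ k, Vc πstar (s1 k) = 0)
    (hVc_nonneg : ∀ (π : Policy) (s : S), 0 ≤ Vc π s)
    (hsaddle : ∀ (k : Fin K) (π : Policy),
      Lag Vr Vc s1 k π lamhat ≤ Lag Vr Vc s1 k πstar lamhat) :
    ∑ k, Vc (pik k) (s1 k) ≤
      Rp Vr Vc s1 pik lamk πstar +
        Rd Vr Vc s1 pik lamk (fun s => lamhat s + 1) :=
  total_violation_le_regret_sum_general Vr Vc s1 pik lamk πstar lamhat hVc0 hsaddle
end

section
/- Online projected gradient descent on a bounded closed convex set with diameter at most D, against convex losses with subgradient norms at most G, using step sizes η_k = D/(G√k), guarantees for all K ≥ 1 that ∑_{k=1}^K f_k(x^k) − min_{x* ∈ 𝒦} ∑_{k=1}^K f_k(x*) ≤ 1.5·G·D·√K. -/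
/-!
Each step of projected gradient descent satisfies
`⟪g_k, x_k - x⋆⟫ ≤ (‖x_k - x⋆‖² - ‖x_{k+1} - x⋆‖²) / (2η_k) + η_k G² / 2`,
because projecting onto a convex set does not increase the distance to its points,
and the subgradient inequality bounds `f_k(x_k) - f_k(x⋆)` by the left side. Summing,
the first terms telescope against the nondecreasing weights `1 / (2η_k)` to at most
`D² / (2η_K) = G D √K / 2`, and the second add up to at most `G D √K` since
`∑_{k ≤ K} 1/√k ≤ 2√K`.
-/

open Finset
open scoped RealInnerProductSpace

section Projection

variable {E : Type*} [NormedAddCommGroup E] [InnerProductSpace ℝ E]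

theorem Convex.norm_sub_le_of_forall_norm_sub_le {C : Set E} (hC : Convex ℝ C) {p x' y : E}
    (hx' : x' ∈ C) (hmin : ∀ z ∈ C, ‖x' - p‖ ≤ ‖z - p‖) (hy : y ∈ C) :
    ‖x' - y‖ ≤ ‖p - y‖ := by
  have hinf : ‖p - x'‖ = ⨅ z : C, ‖p - z‖ := by
    have : Nonempty C := ⟨⟨x', hx'⟩⟩
    have hbdd : BddBelow (Set.range fun z : C => ‖p - z‖) :=
      ⟨0, by rintro _ ⟨z, rfl⟩; exact norm_nonneg _⟩
    refine le_antisymm (le_ciInf fun z => ?_) (ciInf_le hbdd ⟨x', hx'⟩)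
    simpa only [norm_sub_rev p] using hmin z z.2
  have hobtuse : ⟪p - x', y - x'⟫ ≤ 0 :=
    (norm_eq_iInf_iff_real_inner_le_zero hC hx').1 hinf y hy
  have hexpand := norm_sub_sq_real (p - x') (y - x')
  rw [sub_sub_sub_cancel_right, norm_sub_rev y] at hexpand
  nlinarith [sq_nonneg ‖p - x'‖, norm_nonneg (x' - y), norm_nonneg (p - y)]

theorem inner_le_of_norm_sub_le_norm_sub_smul {x x' g y : E} {η : ℝ} (hη : 0 < η)
    (h : ‖x' - y‖ ≤ ‖x - η • g - y‖) :
    ⟪g, x - y⟫ ≤ (‖x - y‖ ^ 2 - ‖x' - y‖ ^ 2) / (2 * η) + η / 2 * ‖g‖ ^ 2 := by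
  have hexpand : ‖x - η • g - y‖ ^ 2 = ‖x - y‖ ^ 2 - 2 * η * ⟪g, x - y⟫ + η ^ 2 * ‖g‖ ^ 2 := by
    rw [sub_right_comm, norm_sub_sq_real, real_inner_smul_right, real_inner_comm, norm_smul,
      Real.norm_eq_abs, mul_pow, sq_abs]
    ring
  have hsq : ‖x' - y‖ ^ 2 ≤ ‖x - η • g - y‖ ^ 2 := by gcongr
  rw [div_add' _ _ _ (by positivity), le_div_iff₀ (by positivity)]
  nlinarith

end Projection

theorem sum_Icc_mul_sub_succ_le {w a : ℕ → ℝ} {B : ℝ} (hw : Monotone w) (hw₀ : 0 ≤ w 0)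
    (ha₀ : ∀ k, 0 ≤ a k) (haB : ∀ k, a k ≤ B) (K : ℕ) :
    ∑ k ∈ Icc 1 K, w k * (a k - a (k + 1)) ≤ w K * B := by
  have hw_nonneg : ∀ k, 0 ≤ w k := fun k => hw₀.trans (hw k.zero_le)
  suffices h : ∑ k ∈ Icc 1 K, w k * (a k - a (k + 1)) ≤ w K * (B - a (K + 1)) by
    nlinarith [hw_nonneg K, ha₀ (K + 1)]
  induction K with
  | zero => simpa using mul_nonneg hw₀ (sub_nonneg.2 (haB 1))
  | succ n ih =>
    rw [sum_Icc_succ_top (by omega)]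
    have hslack : w n * (B - a (n + 1)) ≤ w (n + 1) * (B - a (n + 1)) :=
      mul_le_mul_of_nonneg_right (hw n.le_succ) (sub_nonneg.2 (haB _))
    linarith

theorem sum_Icc_one_div_sqrt_le (K : ℕ) :
    ∑ k ∈ Icc 1 K, 1 / Real.sqrt k ≤ 2 * Real.sqrt K := by
  induction K with
  | zero => simp
  | succ n ih =>
    rw [sum_Icc_succ_top (by omega)]
    set s := Real.sqrt n
    set t := Real.sqrt (n + 1 : ℕ)
    have hst : t ^ 2 = s ^ 2 + 1 := by
      rw [Real.sq_sqrt (by positivity), Real.sq_sqrt (by positivity)]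
      push_cast
      ring
    have hs : 0 ≤ s := Real.sqrt_nonneg _
    have ht : 0 < t := Real.sqrt_pos.2 (by positivity)
    have hlast : 1 / t ≤ 2 * t - 2 * s := by
      rw [div_le_iff₀ ht]
      nlinarith [sq_nonneg (t - s)]
    linarith

theorem online_projected_gradient_descent_regret_general
    (d : ℕ) (𝒦 : Set (EuclideanSpace ℝ (Fin d)))
    (hconv : Convex ℝ 𝒦)
    (D G : ℝ) (hD : 0 < D) (hG : 0 < G)
    (hdiam : ∀ x ∈ 𝒦, ∀ y ∈ 𝒦, ‖x - y‖ ≤ D)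
    (f : ℕ → EuclideanSpace ℝ (Fin d) → ℝ)
    (x g : ℕ → EuclideanSpace ℝ (Fin d))
    (hx : ∀ k, x k ∈ 𝒦)
    (hsub : ∀ k, ∀ y ∈ 𝒦, f k (x k) + (inner ℝ (g k) (y - x k) : ℝ) ≤ f k y)
    (hgnorm : ∀ k, ‖g k‖ ≤ G)
    (η : ℕ → ℝ) (hη : ∀ k, 1 ≤ k → η k = D / (G * Real.sqrt k))
    (hupdate : ∀ k, 1 ≤ k →
      x (k + 1) ∈ 𝒦 ∧
        ∀ y ∈ 𝒦, ‖x (k + 1) - (x k - η k • g k)‖ ≤ ‖y - (x k - η k • g k)‖) :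
    ∀ K : ℕ, 1 ≤ K → ∀ xstar ∈ 𝒦,
      ∑ k ∈ Finset.Icc 1 K, (f k (x k) - f k xstar) ≤
        1.5 * G * D * Real.sqrt K := by
  intro K _ xstar hxstar
  set a : ℕ → ℝ := fun k => ‖x k - xstar‖ ^ 2
  have ha_le : ∀ k, a k ≤ D ^ 2 := fun k =>
    pow_le_pow_left₀ (norm_nonneg _) (hdiam _ (hx k) _ hxstar) 2
  have step : ∀ k ∈ Icc 1 K, f k (x k) - f k xstar ≤
      G / (2 * D) * (Real.sqrt k * (a k - a (k + 1))) + G * D / 2 * (1 / Real.sqrt k) := by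
    intro k hk
    have hk1 := (mem_Icc.1 hk).1
    have hsqrt : 0 < Real.sqrt k := Real.sqrt_pos.2 (by exact_mod_cast hk1)
    have hηk : 0 < η k := by rw [hη k hk1]; positivity
    obtain ⟨hmem, hmin⟩ := hupdate k hk1
    calc f k (x k) - f k xstar ≤ ⟪g k, x k - xstar⟫ := by
          have := hsub k xstar hxstar
          rw [← neg_sub, inner_neg_right] at this
          linarith
      _ ≤ (a k - a (k + 1)) / (2 * η k) + η k / 2 * ‖g k‖ ^ 2 :=
          inner_le_of_norm_sub_le_norm_sub_smul hηk
            (hconv.norm_sub_le_of_forall_norm_sub_le hmem hmin hxstar)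
      _ ≤ (a k - a (k + 1)) / (2 * η k) + η k / 2 * G ^ 2 := by
          gcongr
          exact hgnorm k
      _ = G / (2 * D) * (Real.sqrt k * (a k - a (k + 1))) + G * D / 2 * (1 / Real.sqrt k) := by
          rw [hη k hk1]
          field_simp
  calc ∑ k ∈ Icc 1 K, (f k (x k) - f k xstar)
      ≤ ∑ k ∈ Icc 1 K,
          (G / (2 * D) * (Real.sqrt k * (a k - a (k + 1))) + G * D / 2 * (1 / Real.sqrt k)) :=
        sum_le_sum step
    _ = G / (2 * D) * ∑ k ∈ Icc 1 K, Real.sqrt k * (a k - a (k + 1)) +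
          G * D / 2 * ∑ k ∈ Icc 1 K, 1 / Real.sqrt k := by
        rw [sum_add_distrib, mul_sum, mul_sum]
    _ ≤ G / (2 * D) * (Real.sqrt K * D ^ 2) + G * D / 2 * (2 * Real.sqrt K) := by
        gcongr
        · exact sum_Icc_mul_sub_succ_le (fun _ _ h => Real.sqrt_le_sqrt (Nat.cast_le.2 h))
            (Real.sqrt_nonneg _) (fun _ => sq_nonneg _) ha_le K
        · exact sum_Icc_one_div_sqrt_le K
    _ = 1.5 * G * D * Real.sqrt K := by
        field_simp
        ring

/-- Online projected gradient descent on a bounded closed convex set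
of diameter at most `D`, against convex losses with subgradient norms at most `G`,
with step sizes `η_k = D/(G√k)`, guarantees for all `K ≥ 1` that
`∑_{k=1}^K f_k(x^k) − min_{x* ∈ 𝒦} ∑_{k=1}^K f_k(x*) ≤ 1.5·G·D·√K`. -/
theorem online_projected_gradient_descent_regret
    (d : ℕ) (𝒦 : Set (EuclideanSpace ℝ (Fin d)))
    (hconv : Convex ℝ 𝒦) (hclosed : IsClosed 𝒦) (hne : 𝒦.Nonempty)
    (hbdd : Bornology.IsBounded 𝒦)
    (D G : ℝ) (hD : 0 < D) (hG : 0 < G)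
    (hdiam : ∀ x ∈ 𝒦, ∀ y ∈ 𝒦, ‖x - y‖ ≤ D)
    (f : ℕ → EuclideanSpace ℝ (Fin d) → ℝ)
    (x g : ℕ → EuclideanSpace ℝ (Fin d))
    (hx : ∀ k, x k ∈ 𝒦)
    (hconvf : ∀ k, ConvexOn ℝ 𝒦 (f k))
    (hsub : ∀ k, ∀ y ∈ 𝒦, f k (x k) + (inner ℝ (g k) (y - x k) : ℝ) ≤ f k y)
    (hgnorm : ∀ k, ‖g k‖ ≤ G)
    (η : ℕ → ℝ) (hη : ∀ k, 1 ≤ k → η k = D / (G * Real.sqrt k))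
    (hupdate : ∀ k, 1 ≤ k →
      x (k + 1) ∈ 𝒦 ∧
        ∀ y ∈ 𝒦, ‖x (k + 1) - (x k - η k • g k)‖ ≤ ‖y - (x k - η k • g k)‖) :
    ∀ K : ℕ, 1 ≤ K → ∀ xstar ∈ 𝒦,
      ∑ k ∈ Finset.Icc 1 K, (f k (x k) - f k xstar) ≤
        1.5 * G * D * Real.sqrt K :=
  online_projected_gradient_descent_regret_general d 𝒦 hconv D G hD hG hdiam f x g hx hsub hgnorm η
    hη hupdate
end
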